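/- Consider the scalar ODE dâ/dt = pN·â(â+q)(â+q−1) + ν·g(t)·N·(â+q)(â+q−1), where N, p, ν > 0, 0 < q < 1, and g : [0,∞) → ℝ is continuous with |g(t)| ≤ c·p/ν for all t, where c = min{q, 1−q}. If |â(0)| ≤ c, then |â(t)| ≤ c for all t ≥ 0. -/
import Mathlib


open Set Filter
open scoped Topology

private lemma poly_upper (N p c q M X e : ℝ) (hN : 0 < N) (hp : 0 < p) (hc : 0 < c)
    (hcq : c ≤ q) (hcq1 : c ≤ 1 - q) (hM : c ≤ M)
    (hX1 : c ≤ X) (hX2 : X ≤ M) (he1 : -(c*p) ≤ e) (he2 : e ≤ c*p) :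
    N*(X+q)*(X+q-1)*(p*X+e) ≤ (N*p*(M+1)^2 + 2*N*p*c*(M+1))*(X-c) := by
  have hq0 : 0 < q := lt_of_lt_of_le hc hcq
  have hXq : 0 ≤ X + q := by linarith
  have hM1 : 0 ≤ M + 1 := by linarith
  have hXc : 0 ≤ X - c := by linarith
  have hXqM : X + q ≤ M + 1 := by linarith
  have hP : (X+q)*(X+q-1) ≤ (M+1)^2 := by
    rcases le_or_gt (X+q-1) 0 with h | h
    · nlinarith [mul_nonpos_of_nonneg_of_nonpos hXq h, sq_nonneg (M+1)]
    · nlinarith [mul_le_mul hXqM (by linarith : X+q-1 ≤ M+1) h.le hM1]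
  have h1 : N*((X+q)*(X+q-1))*(p*(X-c)) ≤ N*(M+1)^2*(p*(X-c)) := by
    have := mul_le_mul_of_nonneg_right hP (mul_nonneg hN.le (mul_nonneg hp.le hXc))
    nlinarith [this]
  have h2 : N*((X+q)*(X+q-1))*(p*c+e) ≤ 2*N*p*c*(M+1)*(X-c) := by
    have hpe : 0 ≤ p*c + e := by nlinarith
    have hpe2 : p*c + e ≤ 2*(c*p) := by linarith
    rcases le_or_gt (X+q-1) 0 with h | h
    · have hl : N*((X+q)*(X+q-1))*(p*c+e) ≤ 0 :=
        mul_nonpos_of_nonpos_of_nonneg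
          (mul_nonpos_of_nonneg_of_nonpos hN.le (mul_nonpos_of_nonneg_of_nonpos hXq h)) hpe
      have hr : 0 ≤ 2*N*p*c*(M+1)*(X-c) := by positivity
      linarith
    · have hP2 : (X+q)*(X+q-1) ≤ (M+1)*(X-c) :=
        mul_le_mul hXqM (by linarith) h.le hM1
      have hP3 : ((X+q)*(X+q-1))*(p*c+e) ≤ ((M+1)*(X-c))*(2*(c*p)) :=
        mul_le_mul hP2 hpe2 hpe (mul_nonneg hM1 hXc)
      nlinarith [mul_le_mul_of_nonneg_left hP3 hN.le]
  nlinarith [h1, h2]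

private lemma poly_lower (N p c q M X e : ℝ) (hN : 0 < N) (hp : 0 < p) (hc : 0 < c)
    (hcq : c ≤ q) (hcq1 : c ≤ 1 - q) (hM : c ≤ M)
    (hX1 : -M ≤ X) (hX2 : X ≤ -c) (he1 : -(c*p) ≤ e) (he2 : e ≤ c*p) :
    (N*p*(M+1)^2 + 2*N*p*c*(M+1))*(X+c) ≤ N*(X+q)*(X+q-1)*(p*X+e) := by
  have hq0 : 0 < q := lt_of_lt_of_le hc hcq
  have hXq1 : X + q - 1 ≤ 0 := by linarith
  have hM1 : 0 ≤ M + 1 := by linarith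
  have hXc : X + c ≤ 0 := by linarith
  have hP : (X+q)*(X+q-1) ≤ (M+1)^2 := by
    rcases le_or_gt (X+q) 0 with h | h
    · nlinarith [mul_nonneg (neg_nonneg.2 h) (neg_nonneg.2 hXq1), sq_nonneg (M+1)]
    · nlinarith [mul_nonpos_of_nonneg_of_nonpos h.le hXq1, sq_nonneg (M+1)]
  have h1 : N*(M+1)^2*(p*(X+c)) ≤ N*((X+q)*(X+q-1))*(p*(X+c)) := by
    have := mul_le_mul_of_nonneg_right hP
      (mul_nonneg hN.le (mul_nonneg hp.le (neg_nonneg.2 hXc)))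
    nlinarith [this]
  have h2 : 2*N*p*c*(M+1)*(X+c) ≤ N*((X+q)*(X+q-1))*(e-p*c) := by
    have hpe : e - p*c ≤ 0 := by linarith
    have hpe2 : -(2*(c*p)) ≤ e - p*c := by linarith
    rcases le_or_gt (X+q) 0 with h | h
    · have hP2 : (X+q)*(X+q-1) ≤ (-(X+c))*(M+1) := by
        have := mul_le_mul (by linarith : -(X+q) ≤ -(X+c)) (by linarith : -(X+q-1) ≤ M+1)
          (by linarith) (by linarith : (0:ℝ) ≤ -(X+c))
        nlinarith [this]
      have hP3 : ((X+q)*(X+q-1))*(e-p*c) ≥ ((-(X+c))*(M+1))*(-(2*(c*p))) := by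
        have hPnn : 0 ≤ (X+q)*(X+q-1) := mul_nonneg_of_nonpos_of_nonpos h hXq1
        nlinarith [mul_le_mul_of_nonpos_right hP2 hpe, mul_le_mul_of_nonneg_left hpe2 hPnn]
      nlinarith [mul_le_mul_of_nonneg_left hP3.le hN.le]
    · have hPl : (X+q)*(X+q-1) ≤ 0 := mul_nonpos_of_nonneg_of_nonpos h.le hXq1
      have hr : 0 ≤ N*((X+q)*(X+q-1))*(e-p*c) :=
        mul_nonneg_of_nonpos_of_nonpos (mul_nonpos_of_nonneg_of_nonpos hN.le hPl) hpe
      have hl : 2*N*p*c*(M+1)*(X+c) ≤ 0 :=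
        mul_nonpos_of_nonneg_of_nonpos (by positivity) hXc
      linarith
  nlinarith [h1, h2]

private lemma liminf_slope_max {f : ℝ → ℝ} {c d x r : ℝ} (hf : HasDerivAt f d x)
    (hr : (if c ≤ f x then max d 0 else 0) < r) :
    ∃ᶠ z in 𝓝[>] x, (z - x)⁻¹ * (max (f z - c) 0 - max (f x - c) 0) < r := by
  rcases lt_trichotomy (f x) c with h | h | h
  · rw [if_neg (not_le.2 h)] at hr
    have hev : ∀ᶠ z in 𝓝[>] x, f z < c :=
      nhdsWithin_le_nhds (hf.continuousAt.eventually_lt continuousAt_const h)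
    exact (hev.mono fun z hz => by
      rw [max_eq_right (by linarith : f z - c ≤ 0), max_eq_right (by linarith : f x - c ≤ 0)]
      simpa using hr).frequently
  · rw [if_pos (le_of_eq h.symm)] at hr
    have hd : d < r := lt_of_le_of_lt (le_max_left _ _) hr
    have h0 : (0:ℝ) < r := lt_of_le_of_lt (le_max_right _ _) hr
    have hfreq := (hf.hasDerivWithinAt (s := Ici x)).liminf_right_slope_le hd
    have hmem : ∀ᶠ z in 𝓝[>] x, z ∈ Ioi x := self_mem_nhdsWithin
    refine (hfreq.and_eventually hmem).mono ?_
    rintro z ⟨hz, hz'⟩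
    have hzx : 0 < z - x := sub_pos.2 hz'
    rw [slope_def_field, div_eq_inv_mul] at hz
    rw [max_eq_right (le_of_eq (by rw [h, sub_self]) : f x - c ≤ 0), sub_zero,
      mul_max_of_nonneg _ _ (inv_nonneg.2 hzx.le)]
    rw [h] at hz
    rw [mul_zero]
    exact max_lt hz h0
  · rw [if_pos h.le] at hr
    have hd : d < r := lt_of_le_of_lt (le_max_left _ _) hr
    have hfreq := (hf.hasDerivWithinAt (s := Ici x)).liminf_right_slope_le hd
    have hev : ∀ᶠ z in 𝓝[>] x, c < f z :=
      nhdsWithin_le_nhds (continuousAt_const.eventually_lt hf.continuousAt h)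
    refine ((hfreq.and_eventually hev)).mono ?_
    rintro z ⟨hz, hz'⟩
    rw [slope_def_field, div_eq_inv_mul] at hz
    rwa [max_eq_left (by linarith : (0:ℝ) ≤ f z - c),
      max_eq_left (by linarith : (0:ℝ) ≤ f x - c), sub_sub_sub_cancel_right]

theorem stmt_5 (N p ν q : ℝ) (hN : 0 < N) (hp : 0 < p) (hν : 0 < ν)
    (hq0 : 0 < q) (hq1 : q < 1)
    (c : ℝ) (hc : c = min q (1 - q))
    (g : ℝ → ℝ) (hg : Continuous g)
    (hgb : ∀ t ≥ (0:ℝ), |g t| ≤ c * p / ν)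
    (a : ℝ → ℝ)
    (hda : ∀ t ≥ (0:ℝ), HasDerivAt a
      (p * N * a t * (a t + q) * (a t + q - 1) +
        ν * g t * N * (a t + q) * (a t + q - 1)) t)
    (h0 : |a 0| ≤ c) :
    ∀ t ≥ (0:ℝ), |a t| ≤ c := by
  have hcq : c ≤ q := hc ▸ min_le_left _ _
  have hcq1 : c ≤ 1 - q := hc ▸ min_le_right _ _
  have hcpos : 0 < c := by rw [hc]; exact lt_min hq0 (by linarith)
  intro t ht
  -- continuity of a on [0, t]
  have hcont : ContinuousOn a (Icc 0 t) := fun s hs =>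
    ((hda s hs.1).continuousAt).continuousWithinAt
  -- uniform bound on |a| on [0, t]
  obtain ⟨C, hC⟩ := (isCompact_Icc).exists_bound_of_continuousOn hcont
  set M : ℝ := max C c with hMdef
  have hM : c ≤ M := le_max_right _ _
  have habs : ∀ s ∈ Icc (0:ℝ) t, |a s| ≤ M := fun s hs =>
    le_trans (hC s hs) (le_max_left _ _)
  set K : ℝ := N*p*(M+1)^2 + 2*N*p*c*(M+1) with hKdef
  have hK0 : 0 ≤ K := by positivity
  -- the perturbation bound
  have he : ∀ s ∈ Icc (0:ℝ) t, -(c*p) ≤ ν * g s ∧ ν * g s ≤ c*p := by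
    intro s hs
    have h1 : |ν * g s| ≤ c * p := by
      rw [abs_mul, abs_of_pos hν]
      calc ν * |g s| ≤ ν * (c * p / ν) :=
            mul_le_mul_of_nonneg_left (hgb s hs.1) hν.le
        _ = c * p := by field_simp
    exact abs_le.1 h1
  -- derivative rewritten
  have hD : ∀ s, p * N * a s * (a s + q) * (a s + q - 1) +
      ν * g s * N * (a s + q) * (a s + q - 1)
      = N*(a s+q)*(a s+q-1)*(p*(a s)+(ν * g s)) := fun s => by ring
  -- Upper bound: a t ≤ c
  have hupper : a t ≤ c := by
    have := le_gronwallBound_of_liminf_deriv_right_le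
      (f := fun s => max (a s - c) 0)
      (f' := fun s => if c ≤ a s then
        max (p * N * a s * (a s + q) * (a s + q - 1) +
          ν * g s * N * (a s + q) * (a s + q - 1)) 0 else 0)
      (δ := 0) (K := K) (ε := 0) (a := 0) (b := t)
      (((hcont.sub continuousOn_const).sup continuousOn_const))
      (fun x hx r hr => liminf_slope_max (hda x hx.1) hr)
      (by
        have : a 0 - c ≤ 0 := by have := (abs_le.1 h0).2; linarith
        simp [this])
      (by
        intro x hx
        by_cases h : c ≤ a x
        · rw [if_pos h, max_eq_left (by linarith : (0:ℝ) ≤ a x - c)]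
          have hb := poly_upper N p c q M (a x) (ν * g x) hN hp hcpos hcq hcq1 hM h
            (le_trans (le_abs_self _) (habs x ⟨hx.1, hx.2.le⟩))
            (he x ⟨hx.1, hx.2.le⟩).1 (he x ⟨hx.1, hx.2.le⟩).2
          rw [hD x]
          rw [add_zero, hKdef]
          exact max_le hb (mul_nonneg (hKdef ▸ hK0) (by linarith))
        · rw [if_neg h, add_zero]
          exact mul_nonneg hK0 (le_max_right _ _)
      ) t ⟨ht, le_refl t⟩
    rw [sub_zero, gronwallBound_ε0_δ0] at this
    have := le_trans (le_max_left (a t - c) 0) this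
    linarith
  -- Lower bound: -c ≤ a t
  have hlower : -c ≤ a t := by
    have := le_gronwallBound_of_liminf_deriv_right_le
      (f := fun s => max (-a s - c) 0)
      (f' := fun s => if c ≤ -a s then
        max (-(p * N * a s * (a s + q) * (a s + q - 1) +
          ν * g s * N * (a s + q) * (a s + q - 1))) 0 else 0)
      (δ := 0) (K := K) (ε := 0) (a := 0) (b := t)
      ((((hcont.neg).sub continuousOn_const).sup continuousOn_const))
      (fun x hx r hr => liminf_slope_max (f := fun s => -a s) ((hda x hx.1).neg) hr)
      (by
        have : -a 0 - c ≤ 0 := by have := (abs_le.1 h0).1; linarith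
        simp [this])
      (by
        intro x hx
        by_cases h : c ≤ -a x
        · rw [if_pos h, max_eq_left (by linarith : (0:ℝ) ≤ -a x - c)]
          have hb := poly_lower N p c q M (a x) (ν * g x) hN hp hcpos hcq hcq1 hM
            (neg_le.1 (le_trans (neg_le_abs _) (habs x ⟨hx.1, hx.2.le⟩)))
            (by linarith)
            (he x ⟨hx.1, hx.2.le⟩).1 (he x ⟨hx.1, hx.2.le⟩).2
          rw [hD x]
          rw [add_zero, hKdef]
          exact max_le (by linarith) (mul_nonneg (hKdef ▸ hK0) (by linarith))
        · rw [if_neg h, add_zero]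
          exact mul_nonneg hK0 (le_max_right _ _)
      ) t ⟨ht, le_refl t⟩
    rw [sub_zero, gronwallBound_ε0_δ0] at this
    have := le_trans (le_max_left (-a t - c) 0) this
    linarith
  exact abs_le.2 ⟨hlower, hupper⟩
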